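/- For any m ≥ 0, the FI-module M(m) over a commutative ring k has injectivity degree 0 and surjectivity degree m: for every a ≥ 0, multiplication by T: Φ_a(M(m))_n → Φ_a(M(m))_{n+1} is injective for all n ≥ 0 and is surjective (hence an isomorphism) for all n ≥ m. -/

import Mathlib

open Function

universe u

/-- An FI-module over `k`, presented via the standard skeleton of the category FI:
objects are natural numbers `n` (standing for `{1,…,n}`) and morphisms `m ⟶ n` are
injections `Fin m ↪ Fin n`. -/
structure FIModule (k : Type) [CommRing k] where
  obj : ℕ → Type
  [isAddCommGroup : ∀ n, AddCommGroup (obj n)]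
  [isModule : ∀ n, Module k (obj n)]
  map : ∀ {m n : ℕ}, (Fin m ↪ Fin n) → (obj m →ₗ[k] obj n)
  map_id : ∀ n : ℕ, map (Embedding.refl (Fin n)) = LinearMap.id
  map_comp : ∀ {m n p : ℕ} (f : Fin m ↪ Fin n) (g : Fin n ↪ Fin p),
    map (f.trans g) = (map g).comp (map f)

attribute [instance] FIModule.isAddCommGroup FIModule.isModule

variable {k : Type} [CommRing k]

/-- A sub-FI-module of an FI-module: a submodule of each `V_n`, preserved by all the
maps induced by injections. -/
structure SubFI (V : FIModule k) where
  carrier : ∀ n : ℕ, Submodule k (V.obj n)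
  map_mem : ∀ {m n : ℕ} (f : Fin m ↪ Fin n) {x : V.obj m},
    x ∈ carrier m → V.map f x ∈ carrier n

/-- An FI-module is finitely generated if some finite set of elements of `∐ V_n` is
contained in no proper sub-FI-module. -/
def FIModule.FinitelyGenerated (V : FIModule k) : Prop :=
  ∃ S : Finset (Σ n : ℕ, V.obj n),
    ∀ N : SubFI V, (∀ s ∈ S, s.2 ∈ N.carrier s.1) → ∀ (n : ℕ) (x : V.obj n), x ∈ N.carrier n

/-- An FI-module is generated in degree `≤ d` if the only sub-FI-module containing all
`V_m` for `m ≤ d` is the whole module. -/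
def FIModule.GeneratedInDegreeLE (V : FIModule k) (d : ℕ) : Prop :=
  ∀ N : SubFI V, (∀ m : ℕ, m ≤ d → ∀ x : V.obj m, x ∈ N.carrier m) →
    ∀ (n : ℕ) (x : V.obj n), x ∈ N.carrier n

/-- The `S_n`-representation on `V_n` induced by an FI-module structure. -/
def FIModule.rep (V : FIModule k) (n : ℕ) :
    Representation k (Equiv.Perm (Fin n)) (V.obj n) where
  toFun σ := V.map σ.toEmbedding
  map_one' := by
    show V.map (1 : Equiv.Perm (Fin n)).toEmbedding = 1
    have h : (1 : Equiv.Perm (Fin n)).toEmbedding = Embedding.refl (Fin n) := rfl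
    rw [h, V.map_id]; rfl
  map_mul' σ τ := by
    show V.map (σ * τ).toEmbedding = V.map σ.toEmbedding * V.map τ.toEmbedding
    have h : (σ * τ).toEmbedding = (τ.toEmbedding).trans σ.toEmbedding := rfl
    rw [h, V.map_comp]; rfl

/-- The standard inclusion `{1,…,n} ↪ {1,…,n+1}`. -/
def succEmb (n : ℕ) : Fin n ↪ Fin (n + 1) := Fin.castLEEmb (Nat.le_succ n)

/-! ### Coinvariants and stability degree -/

/-- The permutation of `{1,…,a+n}` induced by a permutation of the last `n` letters
(the first `a` letters are fixed).  This realizes the action of `S_n` on the shifted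
FI-module `S_{+a} V`. -/
def shiftPerm (a n : ℕ) (σ : Equiv.Perm (Fin n)) : Equiv.Perm (Fin (a + n)) :=
  finSumFinEquiv.symm.trans ((Equiv.sumCongr (Equiv.refl (Fin a)) σ).trans finSumFinEquiv)

/-- The submodule of `V_{a+n}` spanned by all `σ·v - v` with `σ ∈ S_n` (acting on the last
`n` letters): the quotient by it is the coinvariant module `Φ_a(V)_n = (V_{a+n})_{S_n}`. -/
def coinvRel (V : FIModule k) (a n : ℕ) : Submodule k (V.obj (a + n)) :=
  Submodule.span k {x | ∃ (σ : Equiv.Perm (Fin n)) (v : V.obj (a + n)),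
    x = V.map (shiftPerm a n σ).toEmbedding v - v}

/-- The coinvariant module `Φ_a(V)_n = (V_{a+n})_{S_n}`. -/
abbrev coinvObj (V : FIModule k) (a n : ℕ) := V.obj (a + n) ⧸ coinvRel V a n

/-- The standard inclusion `{1,…,a+n} ↪ {1,…,a+(n+1)}`, inducing multiplication by `T`
on `Φ_a(V)`. -/
def stabEmb (a n : ℕ) : Fin (a + n) ↪ Fin (a + (n + 1)) :=
  Fin.castLEEmb (by omega)

/-- `V` has injectivity degree `≤ s`: for every `a ≥ 0`, multiplication by `T` on
`Φ_a(V)`, i.e. the map `(V_{a+n})_{S_n} → (V_{a+n+1})_{S_{n+1}}` induced by the standard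
inclusion, is injective for all `n ≥ s`.  (Stated elementwise: the preimage of the
relation submodule is the relation submodule.) -/
def FIModule.InjectivityDegreeLE (V : FIModule k) (s : ℕ) : Prop :=
  ∀ a n : ℕ, s ≤ n → ∀ v : V.obj (a + n),
    V.map (stabEmb a n) v ∈ coinvRel V a (n + 1) → v ∈ coinvRel V a n

/-- `V` has surjectivity degree `≤ s`: for every `a ≥ 0`, multiplication by `T` on
`Φ_a(V)` is surjective for all `n ≥ s`. -/
def FIModule.SurjectivityDegreeLE (V : FIModule k) (s : ℕ) : Prop :=
  ∀ a n : ℕ, s ≤ n → ∀ w : V.obj (a + (n + 1)), ∃ v : V.obj (a + n),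
    w - V.map (stabEmb a n) v ∈ coinvRel V a (n + 1)

/-- `V` has stability degree `≤ s`: for every `a ≥ 0`, multiplication by
`T : Φ_a(V)_n → Φ_a(V)_{n+1}` is an isomorphism (both injective and surjective)
for all `n ≥ s`. -/
def FIModule.StabilityDegreeLE (V : FIModule k) (s : ℕ) : Prop :=
  V.InjectivityDegreeLE s ∧ V.SurjectivityDegreeLE s

/-! ### The free FI-modules `M(m)` and `M(W)` -/

/-- The free FI-module `M(m)`: `M(m)_n` is the free `k`-module on the set
`Hom_FI(m,n)` of injections `Fin m ↪ Fin n`. -/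
noncomputable def Mfree (k : Type) [CommRing k] (m : ℕ) : FIModule k where
  obj n := (Fin m ↪ Fin n) →₀ k
  map g := Finsupp.lmapDomain k k (fun f => f.trans g)
  map_id n := by
    show Finsupp.lmapDomain k k (fun f : Fin m ↪ Fin n => f.trans (Embedding.refl (Fin n)))
        = LinearMap.id
    have h : (fun f : Fin m ↪ Fin n => f.trans (Embedding.refl (Fin n))) = id := rfl
    rw [h, Finsupp.lmapDomain_id]
  map_comp {m' n' p'} f g := by
    show Finsupp.lmapDomain k k (fun h : Fin m ↪ Fin m' => h.trans (f.trans g))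
        = (Finsupp.lmapDomain k k (fun h : Fin m ↪ Fin n' => h.trans g)).comp
            (Finsupp.lmapDomain k k (fun h : Fin m ↪ Fin m' => h.trans f))
    have hcomp : (fun h : Fin m ↪ Fin m' => h.trans (f.trans g))
        = (fun h : Fin m ↪ Fin n' => h.trans g) ∘ (fun h : Fin m ↪ Fin m' => h.trans f) := rfl
    rw [hcomp, Finsupp.lmapDomain_comp]

section MW

variable {a : ℕ} {W : Type} [AddCommGroup W] [Module k W]

/-- The relation submodule presenting `M(W)_n = W ⊗_{k[S_a]} M(a)_n` as a quotient of
the free module `⊕_{f : Fin a ↪ Fin n} W`: we identify `(f∘σ) ⊗ w` with `f ⊗ (σ·w)`. -/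
noncomputable def MWrel (ρ : Representation k (Equiv.Perm (Fin a)) W) (n : ℕ) :
    Submodule k ((Fin a ↪ Fin n) →₀ W) :=
  Submodule.span k {x | ∃ (σ : Equiv.Perm (Fin a)) (f : Fin a ↪ Fin n) (w : W),
    x = Finsupp.single (σ.toEmbedding.trans f) w - Finsupp.single f (ρ σ w)}

/-- The underlying module `M(W)_n = W ⊗_{k[S_a]} M(a)_n` of the FI-module `M(W)`
freely generated by the `S_a`-representation `W`. -/
abbrev MWobj (ρ : Representation k (Equiv.Perm (Fin a)) W) (n : ℕ) :=
  ((Fin a ↪ Fin n) →₀ W) ⧸ MWrel ρ n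

/-- The map on the free modules underlying `M(W)` induced by an injection. -/
noncomputable def MWmapAux (ρ : Representation k (Equiv.Perm (Fin a)) W)
    {n n' : ℕ} (g : Fin n ↪ Fin n') :
    ((Fin a ↪ Fin n) →₀ W) →ₗ[k] ((Fin a ↪ Fin n') →₀ W) :=
  Finsupp.lmapDomain W k (fun f => f.trans g)

theorem MWrel_le (ρ : Representation k (Equiv.Perm (Fin a)) W) {n n' : ℕ}
    (g : Fin n ↪ Fin n') :
    MWrel ρ n ≤ (MWrel (k := k) ρ n').comap (MWmapAux ρ g) := by
  rw [MWrel, Submodule.span_le]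
  rintro x ⟨σ, f, w, rfl⟩
  simp only [SetLike.mem_coe, Submodule.mem_comap, map_sub, MWmapAux,
    Finsupp.lmapDomain_apply, Finsupp.mapDomain_single]
  exact Submodule.subset_span ⟨σ, f.trans g, w, rfl⟩

/-- The FI-module map of `M(W)` induced by an injection. -/
noncomputable def MWmap (ρ : Representation k (Equiv.Perm (Fin a)) W)
    {n n' : ℕ} (g : Fin n ↪ Fin n') : MWobj ρ n →ₗ[k] MWobj ρ n' :=
  Submodule.mapQ _ _ (MWmapAux ρ g) (MWrel_le ρ g)

/-- The FI-module `M(W) = W ⊗_{k[S_a]} M(a)` freely generated by an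
`S_a`-representation `W`, i.e. the image of `W` under the functor `μ_a` left adjoint
to `V ↦ V_a`. -/
noncomputable def MFI (ρ : Representation k (Equiv.Perm (Fin a)) W) : FIModule k where
  obj n := MWobj ρ n
  map g := MWmap ρ g
  map_id n := by
    show MWmap ρ (Embedding.refl (Fin n)) = LinearMap.id
    apply Submodule.linearMap_qext
    apply Finsupp.lhom_ext
    intro f w
    simp only [LinearMap.comp_apply, MWmap, MWmapAux, Submodule.mkQ_apply,
      Submodule.mapQ_apply, Finsupp.lmapDomain_apply, Finsupp.mapDomain_single,
      LinearMap.id_apply]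
    rfl
  map_comp f g := by
    show MWmap ρ (f.trans g) = (MWmap ρ g).comp (MWmap ρ f)
    apply Submodule.linearMap_qext
    apply Finsupp.lhom_ext
    intro h w
    simp only [LinearMap.comp_apply, MWmap, MWmapAux, Submodule.mkQ_apply,
      Submodule.mapQ_apply, Finsupp.lmapDomain_apply, Finsupp.mapDomain_single]
    rfl

end MW

/-! The symmetric group `S_n` acts on the basis `Hom(m, a + n)` of `M(m)_{a+n}` through the
last `n` letters, so the coinvariants `Φ_a(M(m))_n` are free on the orbits. An orbit is
determined by the partial map `[m] ⇀ [a]` recording the points sent to the first `a` letters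
(`headPart`), and the standard inclusion does not change it; this gives injectivity. A partial
map realised in `[a + n + 1]` is realised in `[a + n]` as soon as the remaining points, at
most `m` of them, fit into `n` slots; this gives surjectivity for `n ≥ m`. -/

open Finsupp

theorem Finsupp.mem_of_mapDomain_eq_zero {R M X Y : Type*} [Semiring R] [AddCommGroup M]
    [Module R M] {p : X → Y} {N : Submodule R (X →₀ M)}
    (hN : ∀ x x' (c : M), p x = p x' → single x c - single x' c ∈ N) {v : X →₀ M}
    (hv : mapDomain p v = 0) : v ∈ N := by
  cases isEmpty_or_nonempty X
  · rw [Subsingleton.elim v 0]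
    exact N.zero_mem
  -- `invFun p` picks a representative of each fibre of `p`.
  have hsection : ∀ v, v - mapDomain (invFun p) (mapDomain p v) ∈ N := by
    intro v
    induction v using Finsupp.induction_linear with
    | zero => simp
    | add v w hv hw => simpa [mapDomain_add, add_sub_add_comm] using add_mem hv hw
    | single x c =>
      rw [mapDomain_single, mapDomain_single]
      exact hN _ _ _ (invFun_eq ⟨x, rfl⟩).symm
  simpa [hv] using hsection v

theorem Equiv.Perm.exists_sumMap_eq_of_getLeft?_eq {ι α β : Type*} [Finite ι]
    {f g : ι → α ⊕ β} (hf : Injective f) (hg : Injective g)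
    (h : ∀ i, (f i).getLeft? = (g i).getLeft?) :
    ∃ σ : Perm β, ∀ i, Sum.map id σ (f i) = g i := by
  have hright (i : ι) : (f i).isRight → (g i).isRight := by
    simpa only [← Sum.getLeft?_eq_none_iff, h i] using id
  let u : {i // (f i).isRight} → β := fun i => (f i).getRight i.2
  let u' : {i // (f i).isRight} → β := fun i => (g i).getRight (hright i i.2)
  obtain ⟨σ, hσ⟩ := Perm.exists_extending_pair u u'
    (fun i j hij => Subtype.ext (hf (by simpa [u] using congrArg (Sum.inr (α := α)) hij)))
    (fun i j hij => Subtype.ext (hg (by simpa [u'] using congrArg (Sum.inr (α := α)) hij)))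
  refine ⟨σ, fun i => ?_⟩
  rcases hfi : f i with a | b
  · have hgi := h i
    rw [hfi, Sum.getLeft?_inl, eq_comm, Sum.getLeft?_eq_some_iff] at hgi
    simp [hgi]
  · have hgi := hσ ⟨i, by simp [hfi]⟩
    rw [eq_comm, Sum.getRight_eq_iff] at hgi
    simp [u, hfi, hgi]

theorem exists_embedding_getLeft?_eq {ι α β β' : Type*} (e : ι ↪ β) (f : ι ↪ α ⊕ β') :
    ∃ g : ι ↪ α ⊕ β, ∀ i, (g i).getLeft? = (f i).getLeft? := by
  have hinj : Injective fun i => Sum.map id (fun _ => e i) (f i) := by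
    intro i j hij
    rcases hi : f i with a | b <;> rcases hj : f j with a' | b' <;> simp [hi, hj] at hij
    · exact f.injective (hi.trans (hij ▸ hj.symm))
    · exact hij
  exact ⟨⟨_, hinj⟩, fun i => by simp⟩

@[simp] theorem finSumFinEquiv_symm_shiftPerm {a n : ℕ} (σ : Equiv.Perm (Fin n))
    (x : Fin (a + n)) :
    finSumFinEquiv.symm (shiftPerm a n σ x) = Sum.map id σ (finSumFinEquiv.symm x) := by
  simp [shiftPerm]

@[simp] theorem finSumFinEquiv_symm_stabEmb {a n : ℕ} (x : Fin (a + n)) :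
    finSumFinEquiv.symm (stabEmb a n x) =
      Sum.map id Fin.castSucc (finSumFinEquiv.symm x) := by
  rw [Equiv.symm_apply_eq]
  induction x using Fin.addCases <;> ext <;> simp [stabEmb]

section FreeCoinvariants

variable {m a n : ℕ}

def headPart (a n : ℕ) (f : Fin m ↪ Fin (a + n)) : Fin m → Option (Fin a) :=
  fun j => (finSumFinEquiv.symm (f j)).getLeft?

theorem headPart_comp_trans_shiftPerm (σ : Equiv.Perm (Fin n)) :
    headPart a n ∘ (·.trans (shiftPerm a n σ).toEmbedding) = headPart (m := m) a n := by
  ext f j : 2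
  simp [headPart]

theorem headPart_comp_trans_stabEmb :
    headPart a (n + 1) ∘ (·.trans (stabEmb a n)) = headPart (m := m) a n := by
  ext f j : 2
  simp [headPart]

theorem exists_shiftPerm_of_headPart_eq {f g : Fin m ↪ Fin (a + n)}
    (h : headPart a n f = headPart a n g) :
    ∃ σ : Equiv.Perm (Fin n), f.trans (shiftPerm a n σ).toEmbedding = g := by
  obtain ⟨σ, hσ⟩ := Equiv.Perm.exists_sumMap_eq_of_getLeft?_eq
    (finSumFinEquiv.symm.injective.comp f.injective)
    (finSumFinEquiv.symm.injective.comp g.injective) (congrFun h)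
  refine ⟨σ, DFunLike.ext _ _ fun j => finSumFinEquiv.symm.injective ?_⟩
  simpa using hσ j

theorem exists_headPart_eq (hmn : m ≤ n) (f : Fin m ↪ Fin (a + (n + 1))) :
    ∃ g : Fin m ↪ Fin (a + n), headPart a n g = headPart a (n + 1) f := by
  obtain ⟨g, hg⟩ := exists_embedding_getLeft?_eq (Fin.castLEEmb hmn)
    (f.trans finSumFinEquiv.symm.toEmbedding)
  exact ⟨g.trans finSumFinEquiv.toEmbedding, funext fun j => by simpa [headPart] using hg j⟩

/-- The instances on `(Mfree k m).obj n` agree with those of `Finsupp` only after unfolding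
`Mfree`; transporting along this identity lets the `Finsupp` lemmas apply. -/
noncomputable def Mfree.equivFinsupp (k : Type) [CommRing k] (m n : ℕ) :
    (Mfree k m).obj n ≃ₗ[k] (Fin m ↪ Fin n) →₀ k :=
  LinearEquiv.refl k _

@[simp] theorem Mfree.equivFinsupp_map {n' : ℕ} (g : Fin n ↪ Fin n') (v : (Mfree k m).obj n) :
    equivFinsupp k m n' ((Mfree k m).map g v) = mapDomain (·.trans g) (equivFinsupp k m n v) :=
  rfl

theorem Mfree.mem_coinvRel_iff {v : (Mfree k m).obj (a + n)} :
    v ∈ coinvRel (Mfree k m) a n ↔ mapDomain (headPart a n) (equivFinsupp k m _ v) = 0 := by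
  constructor
  · suffices coinvRel (Mfree k m) a n ≤
        LinearMap.ker (lmapDomain k k (headPart a n) ∘ₗ (equivFinsupp k m _).toLinearMap) from
      fun hv => this hv
    rw [coinvRel, Submodule.span_le]
    rintro _ ⟨σ, v, rfl⟩
    rw [SetLike.mem_coe, LinearMap.mem_ker, LinearMap.comp_apply, map_sub, map_sub,
      LinearEquiv.coe_coe, equivFinsupp_map, lmapDomain_apply, lmapDomain_apply,
      ← mapDomain_comp, headPart_comp_trans_shiftPerm, sub_self]
  · intro hv
    have hN : ∀ f g (c : k), headPart a n f = headPart a n g → single f c - single g c ∈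
        (coinvRel (Mfree k m) a n).comap (equivFinsupp k m _).symm.toLinearMap := by
      intro f g c h
      obtain ⟨σ, rfl⟩ := exists_shiftPerm_of_headPart_eq h.symm
      rw [Submodule.mem_comap, LinearEquiv.coe_coe, map_sub]
      refine Submodule.subset_span ⟨σ, (equivFinsupp k m _).symm (single g c), ?_⟩
      rw [sub_left_inj]
      apply (equivFinsupp k m _).injective
      simp
    simpa using mem_of_mapDomain_eq_zero hN hv

theorem Mfree.injectivityDegreeLE_zero : (Mfree k m).InjectivityDegreeLE 0 := by
  intro a n _ v hv
  rw [mem_coinvRel_iff, equivFinsupp_map, ← mapDomain_comp, headPart_comp_trans_stabEmb] at hv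
  rwa [mem_coinvRel_iff]

theorem Mfree.surjectivityDegreeLE : (Mfree k m).SurjectivityDegreeLE m := by
  intro a n hmn w
  choose g hg using exists_headPart_eq (a := a) hmn
  refine ⟨(equivFinsupp k m _).symm (mapDomain g (equivFinsupp k m _ w)), ?_⟩
  rw [mem_coinvRel_iff, map_sub, equivFinsupp_map, LinearEquiv.apply_symm_apply,
    ← lmapDomain_apply k k, map_sub, lmapDomain_apply, lmapDomain_apply, ← mapDomain_comp,
    ← mapDomain_comp, headPart_comp_trans_stabEmb, comp_def, funext hg, sub_self]

end FreeCoinvariants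

/-- **Stability degrees of the free FI-modules `M(m)`**
(Church–Ellenberg–Farb, Proposition 2.40).
Over any commutative ring `k`, the FI-module `M(m)` has injectivity degree `0` and
surjectivity degree `m`: for every `a ≥ 0`, multiplication by
`T : Φ_a(M(m))_n → Φ_a(M(m))_{n+1}` is injective for all `n ≥ 0`, and surjective
(hence an isomorphism) for all `n ≥ m`. -/
theorem mfree_stability_degrees (k : Type) [CommRing k] (m : ℕ) :
    (Mfree k m).InjectivityDegreeLE 0 ∧ (Mfree k m).SurjectivityDegreeLE m :=
  ⟨Mfree.injectivityDegreeLE_zero, Mfree.surjectivityDegreeLE⟩
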